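/- For any bounded linear operators T_1,…,T_n on a complex Hilbert space H, the joint spectral radius is dominated by the joint numerical radius: r(T_1,…,T_n) ≤ w(T_1,…,T_n). -/

import Mathlib

noncomputable section

/-- For a word `α` (a list of indices), `wordProd T α = T_{i₁} ⋯ T_{i_k}`
(with the identity for the empty word). -/
def wordProd {ι A : Type*} [Monoid A] (T : ι → A) (α : List ι) : A :=
  (α.map T).prod

/-- The joint numerical radius of a tuple of operators indexed by a finite set `ι`. -/
def jointNumRad {H : Type*} [NormedAddCommGroup H] [InnerProductSpace ℂ H]
    {ι : Type*} [Fintype ι] (T : ι → H →L[ℂ] H) : ℝ :=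
  sSup {x : ℝ | ∃ h : List ι → H, (∑' α : List ι, ‖h α‖ ^ 2) = 1 ∧
    x = ‖∑' α : List ι, ∑ j : ι, (inner ℂ (h α) ((T j) (h (j :: α))) : ℂ)‖}

/-- The joint spectral radius `r(T_1,…,T_n) = lim_k ‖∑_{|α|=k} T_α T_α^*‖^{1/(2k)}`
(the limit exists, so it coincides with the `limsup` used here). -/
def jointSpecRad {H : Type*} [NormedAddCommGroup H] [InnerProductSpace ℂ H]
    [CompleteSpace H] {n : ℕ} (T : Fin n → H →L[ℂ] H) : ℝ :=
  Filter.limsup (fun k : ℕ =>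
    ‖∑ α : Fin (k + 1) → Fin n,
        wordProd T (List.ofFn α) * ContinuousLinearMap.adjoint (wordProd T (List.ofFn α))‖
      ^ (1 / (2 * ((k : ℝ) + 1)))) Filter.atTop

section Aux

set_option linter.unusedSectionVars false

variable {H : Type*} [NormedAddCommGroup H] [InnerProductSpace ℂ H] [CompleteSpace H]
  {n : ℕ} (T : Fin n → H →L[ℂ] H)

/-- sum of ‖(wordProd T l.reverse)^* x‖² over words l of length m -/
def sF (m : ℕ) (x : H) : ℝ :=
  ∑ γ : Fin m → Fin n, ‖(ContinuousLinearMap.adjoint (wordProd T (List.ofFn γ).reverse)) x‖ ^ 2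

lemma sF_nonneg (m : ℕ) (x : H) : 0 ≤ sF T m x :=
  Finset.sum_nonneg fun _ _ => by positivity

lemma wordProd_append (l₁ l₂ : List (Fin n)) :
    wordProd T (l₁ ++ l₂) = wordProd T l₁ * wordProd T l₂ := by
  simp [wordProd]

lemma sF_zero (x : H) : sF T 0 x = ‖x‖ ^ 2 := by
  rw [sF]
  rw [Fintype.sum_subsingleton _ (fun i => Fin.elim0 i)]
  simp only [List.ofFn_zero, List.reverse_nil]
  have h1 : wordProd T ([] : List (Fin n)) = 1 := by simp [wordProd]
  rw [h1, ← ContinuousLinearMap.star_eq_adjoint, star_one, ContinuousLinearMap.one_apply]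

lemma ofFn_comp_rev {m : ℕ} (γ : Fin m → Fin n) :
    List.ofFn (fun i => γ (Fin.rev i)) = (List.ofFn γ).reverse := by
  apply List.ext_getElem
  · simp
  · intro i h1 h2
    simp only [List.getElem_ofFn, List.getElem_reverse, List.length_ofFn] at h1 h2 ⊢
    congr 1
    apply Fin.ext
    simp only [Fin.val_rev]
    omega

lemma sF_eq_noRev (m : ℕ) (x : H) :
    sF T m x = ∑ γ : Fin m → Fin n,
      ‖(ContinuousLinearMap.adjoint (wordProd T (List.ofFn γ))) x‖ ^ 2 := by
  rw [sF]
  apply Fintype.sum_bijective (fun γ : Fin m → Fin n => fun i => γ (Fin.rev i))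
    (Function.Involutive.bijective (fun γ => by funext i; simp [Fin.rev_rev]))
  intro γ
  rw [ofFn_comp_rev]

lemma sF_smul (m : ℕ) (r : ℝ) (x : H) :
    sF T m (((r : ℂ)) • x) = r ^ 2 * sF T m x := by
  rw [sF, sF, Finset.mul_sum]
  refine Finset.sum_congr rfl fun γ _ => ?_
  rw [map_smul, norm_smul]
  simp only [Complex.norm_real, Real.norm_eq_abs, mul_pow, sq_abs]

lemma sF_succ (m : ℕ) (x : H) :
    sF T (m + 1) x = ∑ γ : Fin m → Fin n, ∑ j : Fin n,
      ‖(ContinuousLinearMap.adjoint (wordProd T ((j :: List.ofFn γ).reverse))) x‖ ^ 2 := by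
  rw [sF, ← Equiv.sum_comp (Fin.consEquiv fun _ => Fin n) _, Fintype.sum_prod_type,
    Finset.sum_comm]
  refine Finset.sum_congr rfl fun γ _ => Finset.sum_congr rfl fun j _ => ?_
  congr 3
  simp [Fin.consEquiv, List.ofFn_succ]


lemma tsum_list_eq {E : Type*} [AddCommMonoid E] [TopologicalSpace E] [T2Space E]
    (f : List (Fin n) → E) (L : ℕ) (hf : ∀ β : List (Fin n), L < β.length → f β = 0) :
    ∑' β : List (Fin n), f β
      = ∑ m ∈ Finset.range (L + 1), ∑ γ : Fin m → Fin n, f (List.ofFn γ) := by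
  classical
  set A : Finset (List (Fin n)) :=
    (Finset.range (L + 1)).biUnion
      (fun m => Finset.image (fun γ : Fin m → Fin n => List.ofFn γ) Finset.univ) with hA
  have hmemA : ∀ β : List (Fin n), β.length ≤ L → β ∈ A := by
    intro β hβ
    rw [hA, Finset.mem_biUnion]
    refine ⟨β.length, by simp [Nat.lt_succ_iff, hβ], ?_⟩
    rw [Finset.mem_image]
    exact ⟨β.get, Finset.mem_univ _, List.ofFn_get β⟩
  rw [tsum_eq_sum (s := A) (fun β hβ => hf β (by
    by_contra hle
    exact hβ (hmemA β (le_of_not_gt hle))))]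
  rw [hA, Finset.sum_biUnion]
  · refine Finset.sum_congr rfl fun m _ => ?_
    rw [Finset.sum_image]
    intro a _ b _ hab
    exact List.ofFn_injective hab
  · intro p hp q hq hpq
    simp only [Finset.coe_range, Set.mem_Iio] at hp hq
    refine Finset.disjoint_left.2 fun l hl hl' => ?_
    rw [Finset.mem_image] at hl hl'
    obtain ⟨γ, _, rfl⟩ := hl
    obtain ⟨δ, _, hδ⟩ := hl'
    apply hpq
    rw [← List.length_ofFn (f := γ), ← hδ, List.length_ofFn]

lemma numRad_bddAbove :
    BddAbove {x : ℝ | ∃ h : List (Fin n) → H, (∑' α : List (Fin n), ‖h α‖ ^ 2) = 1 ∧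
      x = ‖∑' α : List (Fin n), ∑ j : Fin n, (inner ℂ (h α) ((T j) (h (j :: α))) : ℂ)‖} := by
  refine ⟨∑ j : Fin n, ‖T j‖, fun x hx => ?_⟩
  obtain ⟨h, hnorm, rfl⟩ := hx
  set g : List (Fin n) → ℂ := fun α => ∑ j : Fin n, (inner ℂ (h α) ((T j) (h (j :: α))) : ℂ)
    with hg
  have hs2 : Summable fun β : List (Fin n) => ‖h β‖ ^ 2 := by
    by_contra hns
    rw [tsum_eq_zero_of_not_summable hns] at hnorm
    norm_num at hnorm
  have hs2' : ∀ j : Fin n, Summable fun β : List (Fin n) => ‖h (j :: β)‖ ^ 2 := fun j =>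
    hs2.comp_injective (List.cons_injective)
  set b : List (Fin n) → ℝ :=
    fun β => ∑ j : Fin n, ‖T j‖ * ((‖h β‖ ^ 2 + ‖h (j :: β)‖ ^ 2) / 2) with hb
  have hbs : Summable b := by
    apply summable_sum
    intro j _
    apply Summable.mul_left
    exact ((hs2.add (hs2' j)).div_const 2)
  have hgb : ∀ β, ‖g β‖ ≤ b β := by
    intro β
    refine (norm_sum_le _ _).trans (Finset.sum_le_sum fun j _ => ?_)
    have h1 : ‖(inner ℂ (h β) ((T j) (h (j :: β))) : ℂ)‖ ≤ ‖h β‖ * (‖T j‖ * ‖h (j :: β)‖) :=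
      (norm_inner_le_norm _ _).trans
        (mul_le_mul_of_nonneg_left ((T j).le_opNorm _) (norm_nonneg _))
    refine h1.trans ?_
    have := sq_nonneg (‖h β‖ - ‖h (j :: β)‖)
    have h2 : (0:ℝ) ≤ ‖T j‖ := norm_nonneg _
    nlinarith [norm_nonneg (h β), norm_nonneg (h (j :: β))]
  have hgnorm : Summable fun β => ‖g β‖ :=
    Summable.of_nonneg_of_le (fun _ => norm_nonneg _) hgb hbs
  have hgs : Summable g := hgnorm.of_norm
  refine (norm_tsum_le_tsum_norm hgnorm).trans ?_
  refine (Summable.tsum_le_tsum hgb hgnorm hbs).trans ?_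
  rw [hb, Summable.tsum_finsetSum (fun j _ => ((hs2.add (hs2' j)).div_const 2).mul_left _)]
  refine Finset.sum_le_sum fun j _ => ?_
  rw [tsum_mul_left]
  have hle1 : ∑' β : List (Fin n), ((‖h β‖ ^ 2 + ‖h (j :: β)‖ ^ 2) / 2) ≤ 1 := by
    rw [tsum_div_const, Summable.tsum_add hs2 (hs2' j), hnorm]
    have : ∑' β : List (Fin n), ‖h (j :: β)‖ ^ 2 ≤ 1 := by
      rw [← hnorm]
      exact Summable.tsum_le_tsum_of_inj (fun β => j :: β) List.cons_injective
        (fun c _ => by positivity) (fun β => le_refl _) (hs2' j) hs2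
    linarith
  calc ‖T j‖ * ∑' β : List (Fin n), ((‖h β‖ ^ 2 + ‖h (j :: β)‖ ^ 2) / 2)
      ≤ ‖T j‖ * 1 := by
        exact mul_le_mul_of_nonneg_left hle1 (norm_nonneg _)
    _ = ‖T j‖ := mul_one _

lemma inner_ofReal_smul_left (r : ℝ) (u v : H) :
    (inner ℂ ((r : ℂ) • u) v : ℂ) = (r : ℂ) * inner ℂ u v := by
  rw [inner_smul_left, Complex.conj_ofReal]

lemma inner_ofReal_smul_right (r : ℝ) (u v : H) :
    (inner ℂ u ((r : ℂ) • v) : ℂ) = (r : ℂ) * inner ℂ u v := by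
  rw [inner_smul_right]

lemma div_le_numRad (x : H) (ρ : ℝ) (hρ : 0 < ρ) (L : ℕ)
    (hD : 0 < ∑ m ∈ Finset.range (L + 1), ρ ^ (2 * m) * sF T m x) :
    (∑ k ∈ Finset.range L, ρ ^ (2 * k + 1) * sF T (k + 1) x)
      / (∑ m ∈ Finset.range (L + 1), ρ ^ (2 * m) * sF T m x)
    ≤ sSup {y : ℝ | ∃ h : List (Fin n) → H, (∑' α : List (Fin n), ‖h α‖ ^ 2) = 1 ∧
        y = ‖∑' α : List (Fin n), ∑ j : Fin n, (inner ℂ (h α) ((T j) (h (j :: α))) : ℂ)‖} := by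
  set D := ∑ m ∈ Finset.range (L + 1), ρ ^ (2 * m) * sF T m x with hDdef
  set N := ∑ k ∈ Finset.range L, ρ ^ (2 * k + 1) * sF T (k + 1) x with hNdef
  have hN0 : 0 ≤ N := Finset.sum_nonneg fun k _ => by
    have := sF_nonneg T (k + 1) x; positivity
  set c : ℝ := (Real.sqrt D)⁻¹ with hcdef
  have hc2 : c ^ 2 = D⁻¹ := by
    rw [hcdef, ← Real.sqrt_inv, Real.sq_sqrt (by positivity)]
  have hc0 : 0 ≤ c := by positivity
  set h : List (Fin n) → H := fun β =>
    if β.length ≤ L then ((c * ρ ^ β.length : ℝ) : ℂ) •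
      ((ContinuousLinearMap.adjoint (wordProd T β.reverse)) x) else 0 with hhdef
  have key1 : (∑' β : List (Fin n), ‖h β‖ ^ 2) = 1 := by
    rw [tsum_list_eq _ L (fun β hβ => by
      rw [hhdef]; simp only [if_neg (not_le.2 hβ), norm_zero]; norm_num)]
    have : ∀ m ∈ Finset.range (L + 1), (∑ γ : Fin m → Fin n, ‖h (List.ofFn γ)‖ ^ 2)
        = (c ^ 2 * ρ ^ (2 * m)) * sF T m x := by
      intro m hm
      rw [Finset.mem_range, Nat.lt_succ_iff] at hm
      rw [sF, Finset.mul_sum]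
      refine Finset.sum_congr rfl fun γ _ => ?_
      rw [hhdef]
      simp only [List.length_ofFn, if_pos hm]
      rw [norm_smul, Complex.norm_real, Real.norm_eq_abs,
        abs_of_nonneg (by positivity : (0:ℝ) ≤ c * ρ ^ m)]
      ring
    rw [Finset.sum_congr rfl this]
    have : ∑ m ∈ Finset.range (L + 1), (c ^ 2 * ρ ^ (2 * m)) * sF T m x
        = c ^ 2 * D := by
      rw [hDdef, Finset.mul_sum]; refine Finset.sum_congr rfl fun m _ => by ring
    rw [this, hc2, inv_mul_cancel₀ hD.ne']
  set g : List (Fin n) → ℂ :=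
    fun β => ∑ j : Fin n, (inner ℂ (h β) ((T j) (h (j :: β))) : ℂ) with hgdef
  have key2 : (∑' β : List (Fin n), g β) = ((c ^ 2 * N : ℝ) : ℂ) := by
    have hvan : ∀ β : List (Fin n), L < β.length → g β = 0 := by
      intro β hβ
      rw [hgdef]
      simp only
      refine Finset.sum_eq_zero fun j _ => ?_
      have : h β = 0 := by rw [hhdef]; simp only [if_neg (not_le.2 hβ)]
      rw [this, inner_zero_left]
    rw [tsum_list_eq g L hvan]
    have hterm : ∀ m : ℕ, m < L → ∀ γ : Fin m → Fin n,
        g (List.ofFn γ) = (((c ^ 2 * ρ ^ (2 * m + 1)) * ∑ j : Fin n,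
          ‖(ContinuousLinearMap.adjoint (wordProd T ((j :: List.ofFn γ).reverse))) x‖ ^ 2
            : ℝ) : ℂ) := by
      intro m hm γ
      rw [hgdef]
      simp only
      push_cast [Finset.mul_sum]
      refine Finset.sum_congr rfl fun j _ => ?_
      have h1 : h (List.ofFn γ) = ((c * ρ ^ m : ℝ) : ℂ) •
          ((ContinuousLinearMap.adjoint (wordProd T (List.ofFn γ).reverse)) x) := by
        rw [hhdef]; simp only [List.length_ofFn, if_pos hm.le]
      have hlen2 : (j :: List.ofFn γ).length = m + 1 := by simp
      have h2 : h (j :: List.ofFn γ) = ((c * ρ ^ (m + 1) : ℝ) : ℂ) •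
          ((ContinuousLinearMap.adjoint (wordProd T ((j :: List.ofFn γ).reverse))) x) := by
        rw [hhdef]
        simp only [hlen2, if_pos (Nat.succ_le_of_lt hm)]
      have hA : (ContinuousLinearMap.adjoint (wordProd T ((j :: List.ofFn γ).reverse))) x
          = (ContinuousLinearMap.adjoint (T j))
            ((ContinuousLinearMap.adjoint (wordProd T (List.ofFn γ).reverse)) x) := by
        rw [List.reverse_cons, wordProd_append]
        have hj : wordProd T [j] = T j := by simp [wordProd]
        rw [hj, ← ContinuousLinearMap.star_eq_adjoint, star_mul,
          ContinuousLinearMap.mul_apply, ContinuousLinearMap.star_eq_adjoint,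
          ContinuousLinearMap.star_eq_adjoint]
      rw [h1, h2, hA, map_smul, inner_ofReal_smul_left, inner_ofReal_smul_right,
        ← ContinuousLinearMap.adjoint_inner_left (T j), inner_self_eq_norm_sq_to_K, ← hA]
      push_cast
      ring_nf
      rfl
    rw [Finset.sum_range_succ]
    have hL0 : (∑ γ : Fin L → Fin n, g (List.ofFn γ)) = 0 := by
      refine Finset.sum_eq_zero fun γ _ => ?_
      rw [hgdef]
      simp only
      refine Finset.sum_eq_zero fun j _ => ?_
      have : h (j :: List.ofFn γ) = 0 := by
        rw [hhdef]; simp only [List.length_cons, List.length_ofFn]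
        rw [if_neg (by omega)]
      rw [this, map_zero, inner_zero_right]
    rw [hL0, add_zero]
    have : ∀ m ∈ Finset.range L, (∑ γ : Fin m → Fin n, g (List.ofFn γ))
        = ((c ^ 2 * (ρ ^ (2 * m + 1) * sF T (m + 1) x) : ℝ) : ℂ) := by
      intro m hm
      rw [Finset.mem_range] at hm
      rw [Finset.sum_congr rfl (fun γ _ => hterm m hm γ), ← Complex.ofReal_sum,
        ← Finset.mul_sum, ← sF_succ, mul_assoc]
    rw [Finset.sum_congr rfl this, ← Complex.ofReal_sum]
    norm_cast
    rw [hNdef, Finset.mul_sum]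
  refine le_csSup (numRad_bddAbove T) ?_
  refine ⟨h, key1, ?_⟩
  rw [← hgdef, key2, Complex.norm_real, Real.norm_eq_abs,
    abs_of_nonneg (by positivity : (0:ℝ) ≤ c ^ 2 * N), hc2, div_eq_inv_mul]

lemma re_inner_le_sq (u v : H) : (inner ℂ u v : ℂ).re ≤ ‖u + v‖ ^ 2 / 4 := by
  have h1 := @norm_add_sq ℂ _ _ _ _ u v
  have h2 := @norm_sub_sq ℂ _ _ _ _ u v
  simp only [RCLike.re_to_complex] at h1 h2
  nlinarith [sq_nonneg ‖u - v‖]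

lemma norm_le_two_sF (L : ℕ) :
    ∃ z : H, ‖z‖ ≤ 1 ∧
      ‖∑ α : Fin L → Fin n, wordProd T (List.ofFn α)
        * ContinuousLinearMap.adjoint (wordProd T (List.ofFn α))‖ ≤ 2 * sF T L z := by
  set S := ∑ α : Fin L → Fin n, wordProd T (List.ofFn α)
    * ContinuousLinearMap.adjoint (wordProd T (List.ofFn α)) with hSdef
  have hre : ∀ a b : H, (inner ℂ a (S b) : ℂ).re
      = ∑ α : Fin L → Fin n,
          (inner ℂ ((ContinuousLinearMap.adjoint (wordProd T (List.ofFn α))) a)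
            ((ContinuousLinearMap.adjoint (wordProd T (List.ofFn α))) b) : ℂ).re := by
    intro a b
    rw [hSdef, ContinuousLinearMap.sum_apply, inner_sum, Complex.re_sum]
    refine Finset.sum_congr rfl fun α _ => ?_
    rw [ContinuousLinearMap.mul_apply, ← ContinuousLinearMap.adjoint_inner_left]
  have hpol : ∀ a b : H, (inner ℂ a (S b) : ℂ).re ≤ sF T L (a + b) / 4 := by
    intro a b
    rw [hre, sF_eq_noRev, Finset.sum_div]
    refine Finset.sum_le_sum fun α _ => ?_
    refine (re_inner_le_sq _ _).trans ?_
    rw [← map_add]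
  by_cases hS : ‖S‖ = 0
  · refine ⟨0, by simp, ?_⟩
    rw [hS]
    have := sF_nonneg T L (0 : H)
    positivity
  · have hSpos : 0 < ‖S‖ := (norm_nonneg S).lt_of_ne' hS
    have hy : ∃ y : H, 3 / 4 * ‖S‖ * ‖y‖ < ‖S y‖ := by
      by_contra hall; push_neg at hall
      have : ‖S‖ ≤ 3 / 4 * ‖S‖ :=
        ContinuousLinearMap.opNorm_le_bound _ (by positivity) hall
      linarith
    obtain ⟨y, hy⟩ := hy
    have hy0 : y ≠ 0 := by
      rintro rfl
      simp only [map_zero, norm_zero, mul_zero] at hy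
      exact lt_irrefl _ hy
    have hyn : (0:ℝ) < ‖y‖ := norm_pos_iff.2 hy0
    set y' : H := ((‖y‖⁻¹ : ℝ) : ℂ) • y with hy'def
    have hy'1 : ‖y'‖ = 1 := by
      rw [hy'def, norm_smul, Complex.norm_real, Real.norm_eq_abs,
        abs_of_nonneg (by positivity), inv_mul_cancel₀ hyn.ne']
    have hSy' : 3 / 4 * ‖S‖ < ‖S y'‖ := by
      rw [hy'def, map_smul, norm_smul, Complex.norm_real, Real.norm_eq_abs,
        abs_of_nonneg (by positivity : (0:ℝ) ≤ ‖y‖⁻¹)]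
      rw [lt_inv_mul_iff₀ hyn]
      calc ‖y‖ * (3 / 4 * ‖S‖) = 3 / 4 * ‖S‖ * ‖y‖ := by ring
        _ < ‖S y‖ := hy
    have hSy'pos : 0 < ‖S y'‖ := lt_of_le_of_lt (by positivity) hSy'
    set u : H := ((‖S y'‖⁻¹ : ℝ) : ℂ) • (S y') with hudef
    have hu1 : ‖u‖ = 1 := by
      rw [hudef, norm_smul, Complex.norm_real, Real.norm_eq_abs,
        abs_of_nonneg (by positivity), inv_mul_cancel₀ hSy'pos.ne']
    have hru : (inner ℂ u (S y') : ℂ).re = ‖S y'‖ := by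
      rw [hudef, inner_ofReal_smul_left]
      have h5 : (inner ℂ (S y') (S y') : ℂ).re = ‖S y'‖ ^ 2 := by
        have := @inner_self_eq_norm_sq ℂ _ _ _ _ (S y')
        simpa using this
      have him : (inner ℂ (S y') (S y') : ℂ).im = 0 := by
        exact inner_self_im (𝕜 := ℂ) (S y')
      rw [Complex.mul_re, Complex.ofReal_re, Complex.ofReal_im, h5, him]
      rw [sq]
      field_simp
      simp
    set z : H := ((2⁻¹ : ℝ) : ℂ) • (u + y') with hzdef
    have hz1 : ‖z‖ ≤ 1 := by
      rw [hzdef, norm_smul, Complex.norm_real, Real.norm_eq_abs,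
        abs_of_nonneg (by norm_num : (0:ℝ) ≤ 2⁻¹)]
      calc 2⁻¹ * ‖u + y'‖ ≤ 2⁻¹ * (‖u‖ + ‖y'‖) := by
            exact mul_le_mul_of_nonneg_left (norm_add_le _ _) (by norm_num)
        _ = 1 := by rw [hu1, hy'1]; norm_num
    have h4 : sF T L (u + y') = 4 * sF T L z := by
      have : u + y' = ((2 : ℝ) : ℂ) • z := by
        rw [hzdef, smul_smul]
        norm_num
      rw [this, sF_smul]
      norm_num
    refine ⟨z, hz1, ?_⟩
    have hp := hpol u y'
    have hzn := sF_nonneg T L z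
    calc ‖S‖ ≤ 4 / 3 * ‖S y'‖ := by linarith
      _ = 4 / 3 * (inner ℂ u (S y') : ℂ).re := by rw [hru]
      _ ≤ 4 / 3 * (sF T L (u + y') / 4) := by
          exact mul_le_mul_of_nonneg_left hp (by norm_num)
      _ = 4 * sF T L z / 3 := by rw [h4]; ring
      _ ≤ 2 * sF T L z := by linarith

end Aux

set_option maxHeartbeats 1000000 in
/-- The joint spectral radius is dominated by the joint numerical radius. -/
theorem jointSpecRad_le_jointNumRad {H : Type*} [NormedAddCommGroup H]
    [InnerProductSpace ℂ H] [CompleteSpace H] {n : ℕ} (T : Fin n → H →L[ℂ] H) :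
    jointSpecRad T ≤ jointNumRad T := by
  by_contra hcon
  push_neg at hcon
  set f : ℕ → ℝ := fun k =>
    ‖∑ α : Fin (k + 1) → Fin n,
        wordProd T (List.ofFn α) * ContinuousLinearMap.adjoint (wordProd T (List.ofFn α))‖
      ^ (1 / (2 * ((k : ℝ) + 1))) with hfdef
  have hrdef : jointSpecRad T = Filter.limsup f Filter.atTop := rfl
  rw [hrdef] at hcon
  set w := jointNumRad T with hwdef
  set r := Filter.limsup f Filter.atTop with hrdef2
  have hw0 : 0 ≤ w := by
    rw [hwdef, jointNumRad]
    refine Real.sSup_nonneg (fun y hy => ?_)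
    obtain ⟨h, _, rfl⟩ := hy
    positivity
  obtain ⟨w'', hw''1, hw''2⟩ : ∃ a : ℝ, w < a ∧ a < r := ⟨(w + r) / 2, by linarith, by linarith⟩
  obtain ⟨w', hw'1, hw'2⟩ : ∃ a : ℝ, w < a ∧ a < w'' :=
    ⟨(w + w'') / 2, by linarith, by linarith⟩
  have hw'pos : 0 < w' := lt_of_le_of_lt hw0 hw'1
  have hw''pos : 0 < w'' := lt_trans hw'pos hw'2
  have hfnn : ∀ k, 0 ≤ f k := fun k => Real.rpow_nonneg (norm_nonneg _) _
  have hcob : Filter.IsCoboundedUnder (· ≤ ·) Filter.atTop f :=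
    Filter.IsBoundedUnder.isCoboundedUnder_le
      (Filter.isBoundedUnder_of ⟨0, fun k => hfnn k⟩)
  have hfreq : ∃ᶠ k in Filter.atTop, w'' < f k :=
    Filter.frequently_lt_of_lt_limsup hcob hw''2
  obtain ⟨K0, hK0⟩ : ∃ a : ℝ, a = w * w' / (w' - w) := ⟨_, rfl⟩
  obtain ⟨C, hC⟩ : ∃ a : ℝ, a = 2 / w' * (K0 + 1) := ⟨_, rfl⟩
  have hq1 : 1 < w'' / w' := (one_lt_div hw'pos).2 hw'2
  have hev : ∀ᶠ k : ℕ in Filter.atTop, C ≤ (w'' / w') ^ (2 * (k + 1)) := by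
    have h2 : Filter.Tendsto (fun m : ℕ => (w'' / w') ^ m) Filter.atTop Filter.atTop :=
      tendsto_pow_atTop_atTop_of_one_lt hq1
    have h3 := h2.eventually_ge_atTop C
    rw [Filter.eventually_atTop] at h3 ⊢
    obtain ⟨M, hM⟩ := h3
    exact ⟨M, fun k hk => hM _ (by omega)⟩
  obtain ⟨k, hk1, hk2⟩ := (hfreq.and_eventually hev).exists
  set Snorm : ℝ := ‖∑ α : Fin (k + 1) → Fin n,
      wordProd T (List.ofFn α) * ContinuousLinearMap.adjoint (wordProd T (List.ofFn α))‖
    with hSndef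
  have hSnn : (0:ℝ) ≤ Snorm := norm_nonneg _
  have hSn : w'' ^ (2 * (k + 1)) < Snorm := by
    have hx : w'' ^ (2 * (k + 1)) < (f k) ^ (2 * (k + 1)) :=
      pow_lt_pow_left₀ hk1 hw''pos.le (by omega)
    calc w'' ^ (2 * (k + 1)) < (f k) ^ (2 * (k + 1)) := hx
      _ = Snorm := by
        rw [hfdef]
        simp only
        rw [← hSndef, ← Real.rpow_natCast (Snorm ^ (1 / (2 * ((k : ℝ) + 1)))) (2 * (k + 1)),
          ← Real.rpow_mul hSnn]
        have he : 1 / (2 * ((k : ℝ) + 1)) * ((2 * (k + 1) : ℕ) : ℝ) = 1 := by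
          push_cast
          field_simp
        rw [he, Real.rpow_one]
  obtain ⟨x, hx1, hx2⟩ := norm_le_two_sF T (k + 1)
  rw [← hSndef] at hx2
  have hsL : w'' ^ (2 * (k + 1)) / 2 < sF T (k + 1) x := by linarith
  have hsLpos : 0 < sF T (k + 1) x := lt_of_le_of_lt (by positivity) hsL
  obtain ⟨ρ, hρ⟩ : ∃ a : ℝ, a = w'⁻¹ := ⟨_, rfl⟩
  have hρpos : 0 < ρ := by rw [hρ]; positivity
  have hρw : ρ * w' = 1 := by rw [hρ]; exact inv_mul_cancel₀ hw'pos.ne'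
  set D : ℝ := ∑ m ∈ Finset.range (k + 1 + 1), ρ ^ (2 * m) * sF T m x with hDdef
  set N : ℝ := ∑ i ∈ Finset.range (k + 1), ρ ^ (2 * i + 1) * sF T (i + 1) x with hNdef
  have hD : 0 < D := by
    rw [hDdef]
    refine Finset.sum_pos' (fun m _ => ?_) ⟨k + 1, Finset.self_mem_range_succ _, ?_⟩
    · have := sF_nonneg T m x; positivity
    · positivity
  have hNlow : ρ ^ (2 * k + 1) * sF T (k + 1) x ≤ N := by
    rw [hNdef]
    refine Finset.single_le_sum (f := fun i => ρ ^ (2 * i + 1) * sF T (i + 1) x)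
      (fun i _ => ?_) (Finset.self_mem_range_succ k)
    have := sF_nonneg T (i + 1) x; positivity
  have hN0 : 0 ≤ N := le_trans (by positivity) hNlow
  have hKN : K0 + 1 ≤ N := by
    have e1 : ρ ^ (2 * k + 1) * (w'' ^ (2 * (k + 1)) / 2)
        ≤ ρ ^ (2 * k + 1) * sF T (k + 1) x :=
      mul_le_mul_of_nonneg_left hsL.le (by positivity)
    have e2 : ρ ^ (2 * k + 1) * (w'' ^ (2 * (k + 1)) / 2)
        = w' / 2 * (w'' / w') ^ (2 * (k + 1)) := by
      rw [hρ, div_pow, inv_pow]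
      field_simp
      ring
    have e3 : w' / 2 * C ≤ w' / 2 * (w'' / w') ^ (2 * (k + 1)) :=
      mul_le_mul_of_nonneg_left hk2 (by positivity)
    have e4 : w' / 2 * C = K0 + 1 := by
      rw [hC]
      field_simp
    nlinarith
  have hD' := hD
  rw [hDdef] at hD'
  have hmem : N / D ≤ w := by
    have h5 := div_le_numRad T x ρ hρpos (k + 1) hD'
    rw [← hDdef, ← hNdef] at h5
    exact h5
  have hDle : D ≤ 1 + ρ * N := by
    rw [hDdef, Finset.sum_range_succ']
    have hx0 : ρ ^ (2 * 0) * sF T 0 x ≤ 1 := by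
      calc ρ ^ (2 * 0) * sF T 0 x = ‖x‖ ^ 2 := by rw [sF_zero]; norm_num
        _ ≤ 1 := pow_le_one₀ (norm_nonneg x) hx1
    have hρN : ∑ i ∈ Finset.range (k + 1), ρ ^ (2 * (i + 1)) * sF T (i + 1) x = ρ * N := by
      rw [hNdef, Finset.mul_sum]
      exact Finset.sum_congr rfl fun i _ => by ring
    rw [hρN]
    linarith
  have hfinal : w < N / D := by
    rw [lt_div_iff₀ hD]
    have h1 : w * D ≤ w * (1 + ρ * N) := mul_le_mul_of_nonneg_left hDle hw0
    have hd : 0 < w' - w := by linarith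
    have hKid : K0 * (w' - w) = w * w' := by
      rw [hK0]; field_simp
    have h3 : (K0 + 1) * (w' - w) ≤ N * (w' - w) :=
      mul_le_mul_of_nonneg_right hKN hd.le
    have h4 : w * (1 + ρ * N) * w' = w * w' + w * N := by
      calc w * (1 + ρ * N) * w' = w * w' + w * N * (ρ * w') := by ring
        _ = w * w' + w * N := by rw [hρw, mul_one]
    have h5 : w * w' + w * N < N * w' := by nlinarith
    have h6 : w * (1 + ρ * N) < N := by
      refine (mul_lt_mul_iff_of_pos_right hw'pos).1 ?_
      rw [h4]
      exact h5
    linarith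
  linarith
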